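/- arXiv:1908.05714 — 14 statements merged into one kernel-verified Lean document; each statement's English description precedes it below -/
import Mathlib

section
/- If Q : U → ℝ^K is continuous on an open convex set U ⊆ ℝ^K and satisfies the law of demand (i.e., (Q(u) - Q(ũ)) ⬝ (u - ũ) ≥ 0 for all u, ũ ∈ U), then for every y ∈ ℝ^K the inverse image Q⁻¹(y) = {u ∈ U | Q(u) = y} is a convex set. -/
open scoped RealInnerProductSpace Topology
open Filter

/-!
The zero set of `Q - y` is squeezed between two descriptions. If `Q u = y`, monotonicity gives
`0 ≤ ⟪Q z - y, z - u⟫` for every `z ∈ U`, so `u` lies in the *Minty set*, an intersection of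
half-spaces and hence convex. Conversely (Minty's trick), if `u ∈ U` lies in the Minty set, testing
with `z = u + t • (y - Q u)` and letting `t → 0⁺` gives `-‖Q u - y‖² ≥ 0` by continuity. So the
fibre is `U ∩ (Minty set)`, an intersection of convex sets.
-/

variable {E : Type*} [NormedAddCommGroup E] [InnerProductSpace ℝ E]

def mintySet (U : Set E) (Q : E → E) (y : E) : Set E :=
  ⋂ z ∈ U, {x | 0 ≤ ⟪Q z - y, z - x⟫}

theorem convex_mintySet (U : Set E) (Q : E → E) (y : E) : Convex ℝ (mintySet U Q y) := by
  refine convex_iInter₂ fun z _ => ?_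
  simp only [inner_sub_right, sub_nonneg]
  exact convex_halfSpace_le (innerₛₗ ℝ (Q z - y)).isLinear _

theorem mem_mintySet_of_apply_eq {U : Set E} {Q : E → E} {y u : E}
    (hmono : ∀ z ∈ U, 0 ≤ ⟪Q z - Q u, z - u⟫) (hu : Q u = y) : u ∈ mintySet U Q y :=
  Set.mem_iInter₂.mpr fun z hz => hu ▸ hmono z hz

theorem apply_eq_of_eventually_minty {Q : E → E} {y v : E} (hQ : ContinuousAt Q v)
    (h : ∀ᶠ z in 𝓝 v, 0 ≤ ⟪Q z - y, z - v⟫) : Q v = y := by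
  set d := y - Q v
  have hpath : Tendsto (fun t : ℝ => v + t • d) (𝓝[>] 0) (𝓝 v) := by
    have : Continuous fun t : ℝ => v + t • d := by fun_prop
    simpa using this.continuousAt (x := 0) |>.tendsto.mono_left nhdsWithin_le_nhds
  have hev : ∀ᶠ t : ℝ in 𝓝[>] 0, 0 ≤ ⟪Q (v + t • d) - y, d⟫ := by
    filter_upwards [hpath.eventually h, self_mem_nhdsWithin] with t ht (htpos : 0 < t)
    rw [add_sub_cancel_left, real_inner_smul_right] at ht
    exact (mul_nonneg_iff_of_pos_left htpos).mp ht
  have hlim : Tendsto (fun t : ℝ => ⟪Q (v + t • d) - y, d⟫) (𝓝[>] 0) (𝓝 ⟪Q v - y, d⟫) :=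
    ((hQ.tendsto.comp hpath).sub_const y).inner tendsto_const_nhds
  have hle : 0 ≤ ⟪Q v - y, d⟫ := ge_of_tendsto hlim hev
  rw [show d = -(Q v - y) from (neg_sub _ _).symm, inner_neg_right, real_inner_self_eq_norm_sq] at hle
  exact sub_eq_zero.mp (norm_eq_zero.mp (by nlinarith [norm_nonneg (Q v - y)]))

theorem stmt_0 {K : ℕ} (U : Set (EuclideanSpace ℝ (Fin K)))
    (hUopen : IsOpen U) (hUconv : Convex ℝ U)
    (Q : EuclideanSpace ℝ (Fin K) → EuclideanSpace ℝ (Fin K))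
    (hQcont : ContinuousOn Q U)
    (hLoD : ∀ u ∈ U, ∀ w ∈ U, (0:ℝ) ≤ ⟪Q u - Q w, u - w⟫)
    (y : EuclideanSpace ℝ (Fin K)) :
    Convex ℝ {u ∈ U | Q u = y} := by
  have hfibre : {u ∈ U | Q u = y} = U ∩ mintySet U Q y := by
    ext u
    refine ⟨fun ⟨hu, hQu⟩ => ⟨hu, mem_mintySet_of_apply_eq (fun z hz => hLoD z hz u hu) hQu⟩,
      fun ⟨hu, hminty⟩ => ⟨hu, ?_⟩⟩
    have hUnhds : U ∈ 𝓝 u := hUopen.mem_nhds hu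
    exact apply_eq_of_eventually_minty (hQcont.continuousAt hUnhds)
      (mem_of_superset hUnhds fun z hz => Set.mem_iInter₂.mp hminty z hz)
  rw [hfibre]
  exact hUconv.inter (convex_mintySet U Q y)
end

section
/- Let Q : U → ℝ^K be continuous on an open convex set U and satisfy the law of demand. If the only line segments in U along which Q is constant are singleton points, then Q is injective on U. -/
open scoped RealInnerProductSpace

theorem stmt_1 {K : ℕ} (U : Set (EuclideanSpace ℝ (Fin K)))
    (hUopen : IsOpen U) (hUconv : Convex ℝ U)
    (Q : EuclideanSpace ℝ (Fin K) → EuclideanSpace ℝ (Fin K))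
    (hQcont : ContinuousOn Q U)
    (hLoD : ∀ u ∈ U, ∀ w ∈ U, (0:ℝ) ≤ ⟪Q u - Q w, u - w⟫)
    (hseg : ∀ u ∈ U, ∀ w ∈ U, (∀ x ∈ segment ℝ u w, Q x = Q u) → u = w) :
    Set.InjOn Q U := by
  intro u hu w hw hQ
  apply hseg u hu w hw
  intro x hx
  have hxU : x ∈ U := hUconv.segment_subset hu hw hx
  obtain ⟨a, b, ha, hb, hab, hxe⟩ := hx
  set h : EuclideanSpace ℝ (Fin K) := Q u - Q x with hh
  have hcont : Continuous (fun ε : ℝ => x + ε • h) := by continuity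
  have hevU : ∀ᶠ ε : ℝ in nhdsWithin 0 (Set.Ioi 0), x + ε • h ∈ U := by
    have hmem : (fun ε : ℝ => x + ε • h) ⁻¹' U ∈ nhds (0:ℝ) := by
      apply hcont.continuousAt.preimage_mem_nhds
      simpa using hUopen.mem_nhds hxU
    exact nhdsWithin_le_nhds hmem
  have hev : ∀ᶠ ε : ℝ in nhdsWithin 0 (Set.Ioi 0),
      (0:ℝ) ≤ ⟪Q (x + ε • h) - Q u, h⟫ := by
    filter_upwards [hevU, self_mem_nhdsWithin] with ε hzU hε
    have hεpos : (0:ℝ) < ε := hε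
    set z : EuclideanSpace ℝ (Fin K) := x + ε • h with hz
    have h1 : (0:ℝ) ≤ ⟪Q z - Q u, z - u⟫ := hLoD z hzU u hu
    have h2 : (0:ℝ) ≤ ⟪Q z - Q u, z - w⟫ := by
      have h2' := hLoD z hzU w hw
      rwa [← hQ] at h2'
    have hcomb : a • (z - u) + b • (z - w) = ε • h := by
      have heq : a • (z - u) + b • (z - w) = (a + b) • z - (a • u + b • w) := by
        rw [smul_sub, smul_sub, add_smul]; abel
      rw [heq, hab, hxe, one_smul, hz]; abel
    have hsum : (0:ℝ) ≤ ⟪Q z - Q u, ε • h⟫ := by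
      rw [← hcomb, inner_add_right, real_inner_smul_right, real_inner_smul_right]
      exact add_nonneg (mul_nonneg ha h1) (mul_nonneg hb h2)
    rw [real_inner_smul_right] at hsum
    exact (mul_nonneg_iff_of_pos_left hεpos).mp hsum
  have htend : Filter.Tendsto (fun ε : ℝ => ⟪Q (x + ε • h) - Q u, h⟫)
      (nhdsWithin 0 (Set.Ioi 0)) (nhds ⟪Q x - Q u, h⟫) := by
    have h1 : Filter.Tendsto (fun ε : ℝ => x + ε • h) (nhdsWithin 0 (Set.Ioi 0))
        (nhdsWithin x U) := by
      rw [tendsto_nhdsWithin_iff]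
      refine ⟨?_, hevU⟩
      have h0 : Filter.Tendsto (fun ε : ℝ => x + ε • h) (nhds 0) (nhds (x + (0:ℝ) • h)) :=
        hcont.continuousAt
      simpa using h0.mono_left nhdsWithin_le_nhds
    have h2 := (hQcont x hxU).tendsto.comp h1
    exact (h2.sub tendsto_const_nhds).inner tendsto_const_nhds
  have hle : (0:ℝ) ≤ ⟪Q x - Q u, h⟫ := ge_of_tendsto htend hev
  have hzero : h = 0 := by
    have hneg : Q x - Q u = -h := by rw [hh]; abel
    rw [hneg, inner_neg_left] at hle
    have : ⟪h, h⟫ = 0 := le_antisymm (by linarith) real_inner_self_nonneg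
    exact inner_self_eq_zero.mp this
  have : Q u - Q x = 0 := hzero
  linear_combination (norm := abel) -this
end

section
/- Let Q : U → ℝ^K be continuous on an open convex set U and satisfy the law of demand. Then Q is injective on U if and only if Q is locally injective on U (every point of U has a neighborhood on which Q is injective). -/
open scoped RealInnerProductSpace

theorem stmt_2 {K : ℕ} (U : Set (EuclideanSpace ℝ (Fin K)))
    (hUopen : IsOpen U) (hUconv : Convex ℝ U)
    (Q : EuclideanSpace ℝ (Fin K) → EuclideanSpace ℝ (Fin K))
    (hQcont : ContinuousOn Q U)
    (hLoD : ∀ u ∈ U, ∀ w ∈ U, (0:ℝ) ≤ ⟪Q u - Q w, u - w⟫) :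
    Set.InjOn Q U ↔ ∀ u ∈ U, ∃ N ∈ nhds u, Set.InjOn Q (N ∩ U) := by
  constructor
  · intro h u hu
    exact ⟨Set.univ, Filter.univ_mem, fun x hx y hy hxy => h hx.2 hy.2 hxy⟩
  · intro hloc u hu w hw hQuw
    by_contra hne
    set d := w - u with hdd
    have hd0 : d ≠ 0 := sub_ne_zero.mpr (Ne.symm hne)
    set x : ℝ → EuclideanSpace ℝ (Fin K) := fun t => u + t • d with hxdef
    have hxmem : ∀ t ∈ Set.Icc (0:ℝ) 1, x t ∈ U := by
      intro t ht
      have h1 : (0:ℝ) ≤ 1 - t := by linarith [ht.2]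
      have := hUconv hu hw h1 ht.1 (by ring)
      convert this using 1
      simp only [hxdef, hdd]
      module
    have stepA : ∀ t ∈ Set.Ioo (0:ℝ) 1, ⟪Q (x t) - Q u, d⟫ = 0 := by
      intro t ht
      have hm : x t ∈ U := hxmem t ⟨le_of_lt ht.1, le_of_lt ht.2⟩
      have h1 := hLoD (x t) hm u hu
      have h2 := hLoD (x t) hm w hw
      have e1 : x t - u = t • d := by simp only [hxdef]; abel
      have e2 : x t - w = (t - 1) • d := by
        simp only [hxdef, hdd]; module
      rw [e1, real_inner_smul_right] at h1
      rw [← hQuw, e2, real_inner_smul_right] at h2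
      nlinarith [ht.1, ht.2]
    have key : ∀ t ∈ Set.Ioo (0:ℝ) 1, Q (x t) = Q u := by
      intro t ht
      have hm : x t ∈ U := hxmem t ⟨le_of_lt ht.1, le_of_lt ht.2⟩
      set p := Q (x t) - Q u with hp
      have c0 : ⟪p, d⟫ = 0 := stepA t ht
      set z : ℝ → EuclideanSpace ℝ (Fin K) := fun ε => x t - ε • p with hz
      have hzc : Filter.Tendsto z (nhdsWithin 0 (Set.Ioi 0)) (nhds (x t)) := by
        have : Filter.Tendsto z (nhds 0) (nhds (z 0)) := by
          apply Continuous.tendsto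
          exact continuous_const.sub (continuous_id.smul continuous_const)
        have hz0 : z 0 = x t := by simp [hz]
        rw [hz0] at this
        exact this.mono_left nhdsWithin_le_nhds
      have hmemU : ∀ᶠ ε in nhdsWithin 0 (Set.Ioi 0), z ε ∈ U :=
        hzc (hUopen.mem_nhds hm)
      have hbLe : ∀ᶠ ε in nhdsWithin 0 (Set.Ioi 0), ⟪Q (z ε) - Q u, p⟫ ≤ 0 := by
        filter_upwards [hmemU, self_mem_nhdsWithin] with ε hzU hεpos
        have hε : (0:ℝ) < ε := hεpos
        have h1 := hLoD (z ε) hzU u hu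
        have h2 := hLoD (z ε) hzU w hw
        have e1 : z ε - u = t • d - ε • p := by
          simp only [hz, hxdef]; abel
        have e2 : z ε - w = (t - 1) • d - ε • p := by
          simp only [hz, hxdef, hdd]; module
        rw [e1, inner_sub_right, real_inner_smul_right, real_inner_smul_right] at h1
        rw [← hQuw, e2, inner_sub_right, real_inner_smul_right, real_inner_smul_right] at h2
        nlinarith [ht.1, ht.2]
      have hQz : Filter.Tendsto (fun ε => Q (z ε)) (nhdsWithin 0 (Set.Ioi 0))
          (nhds (Q (x t))) := by
        apply (hQcont (x t) hm).tendsto.comp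
        rw [tendsto_nhdsWithin_iff]
        exact ⟨hzc, hmemU⟩
      have hlim : Filter.Tendsto (fun ε => ⟪Q (z ε) - Q u, p⟫) (nhdsWithin 0 (Set.Ioi 0))
          (nhds ⟪p, p⟫) := by
        have : Filter.Tendsto (fun ε => Q (z ε) - Q u) (nhdsWithin 0 (Set.Ioi 0))
            (nhds p) := hQz.sub tendsto_const_nhds
        exact this.inner tendsto_const_nhds
      have hle : ⟪p, p⟫ ≤ 0 :=
        le_of_tendsto hlim hbLe
      have : p = 0 := by
        have := real_inner_self_nonpos.mp hle
        exact this
      exact sub_eq_zero.mp this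
    obtain ⟨N, hN, hinj⟩ := hloc u hu
    have hxc : Filter.Tendsto x (nhdsWithin 0 (Set.Ioi 0)) (nhds u) := by
      have : Filter.Tendsto x (nhds 0) (nhds (x 0)) := by
        apply Continuous.tendsto
        exact continuous_const.add (continuous_id.smul continuous_const)
      have hx0 : x 0 = u := by simp [hxdef]
      rw [hx0] at this
      exact this.mono_left nhdsWithin_le_nhds
    have hev : ∀ᶠ t in nhdsWithin 0 (Set.Ioi 0),
        x t ∈ N ∧ t ∈ Set.Ioo (0:ℝ) 1 := by
      have h1 : ∀ᶠ t in nhdsWithin 0 (Set.Ioi 0), x t ∈ N := hxc hN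
      have h2 : ∀ᶠ t in nhdsWithin 0 (Set.Ioi 0), t ∈ Set.Ioo (0:ℝ) 1 := by
        have : Set.Ioo (0:ℝ) 1 ∈ nhdsWithin 0 (Set.Ioi 0) := by
          apply mem_nhdsWithin.mpr
          exact ⟨Set.Iio 1, isOpen_Iio, by norm_num, by
            rintro y ⟨hy1, hy2⟩; exact ⟨hy2, hy1⟩⟩
        exact this
      filter_upwards [h1, h2] with t ha hb using ⟨ha, hb⟩
    obtain ⟨t, ⟨hxN, htIoo⟩⟩ := hev.exists
    have hxU : x t ∈ U := hxmem t ⟨le_of_lt htIoo.1, le_of_lt htIoo.2⟩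
    have huN : u ∈ N := mem_of_mem_nhds hN
    have heq : x t = u := hinj ⟨hxN, hxU⟩ ⟨huN, hu⟩ (key t htIoo)
    have : t • d = 0 := by
      have := heq
      simp only [hxdef] at this
      have h' : u + t • d - u = 0 := by rw [this]; abel
      simpa using h'
    rcases smul_eq_zero.mp this with h | h
    · exact absurd h (ne_of_gt htIoo.1)
    · exact hd0 h
end

section
/- Let Q : U → ℝ^K be continuous on an open convex set U and satisfy the law of demand, and let H ⊆ U be convex. If the restriction of Q to H is not constant on any nondegenerate line segment contained in H, then Q is injective on H. -/
open scoped RealInnerProductSpace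

open Filter Topology

set_option maxHeartbeats 1000000 in
theorem stmt_3 {K : ℕ} (U H : Set (EuclideanSpace ℝ (Fin K)))
    (hUopen : IsOpen U) (hUconv : Convex ℝ U)
    (Q : EuclideanSpace ℝ (Fin K) → EuclideanSpace ℝ (Fin K))
    (hQcont : ContinuousOn Q U)
    (hLoD : ∀ u ∈ U, ∀ w ∈ U, (0:ℝ) ≤ ⟪Q u - Q w, u - w⟫)
    (hHU : H ⊆ U) (hHconv : Convex ℝ H)
    (hseg : ∀ u ∈ H, ∀ w ∈ H, u ≠ w → segment ℝ u w ⊆ H →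
      ¬ (∀ x ∈ segment ℝ u w, Q x = Q u)) :
    Set.InjOn Q H := by
  intro u hu w hw hQuw
  by_contra hne
  have hsegH : segment ℝ u w ⊆ H := hHconv.segment_subset hu hw
  refine hseg u hu w hw hne hsegH ?_
  rintro x hxseg
  obtain ⟨a, b, ha, hb, hab, hxdef⟩ := hxseg
  obtain rfl : b = 1 - a := by linarith
  have hxU : x ∈ U := hHU (hsegH ⟨a, 1 - a, ha, hb, hab, hxdef⟩)
  -- key: pseudo-monotonicity against x with value Q u
  have key : ∀ z ∈ U, (0:ℝ) ≤ ⟪Q z - Q u, z - x⟫ := by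
    intro z hz
    have h1 := hLoD z hz u (hHU hu)
    have h2 := hLoD z hz w (hHU hw)
    have hzx : z - x = a • (z - u) + (1 - a) • (z - w) := by
      rw [← hxdef]; module
    rw [hzx, inner_add_right, real_inner_smul_right, real_inner_smul_right, hQuw]
    have := mul_nonneg ha h1
    have := mul_nonneg hb h2
    rw [hQuw] at h1
    nlinarith [mul_nonneg ha h1, mul_nonneg hb h2]
  -- take directional limit
  set v := Q u - Q x with hv
  obtain ⟨ε, hε, hball⟩ := Metric.isOpen_iff.mp hUopen x hxU
  have hcont : ContinuousAt Q x := hQcont.continuousAt (hUopen.mem_nhds hxU)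
  have hφ : Tendsto (fun s : ℝ => ⟪Q (x + s • v) - Q u, v⟫) (𝓝[>] (0:ℝ))
      (𝓝 ⟪Q x - Q u, v⟫) := by
    have hx0 : Tendsto (fun s : ℝ => x + s • v) (𝓝 (0:ℝ)) (𝓝 x) := by
      have : Continuous (fun s : ℝ => x + s • v) := by continuity
      have h := this.tendsto 0
      simpa using h
    have : Tendsto (fun s : ℝ => ⟪Q (x + s • v) - Q u, v⟫) (𝓝 (0:ℝ))
        (𝓝 ⟪Q x - Q u, v⟫) := by
      exact ((hcont.tendsto.comp hx0).sub tendsto_const_nhds).inner tendsto_const_nhds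
    exact this.mono_left nhdsWithin_le_nhds
  have hev : ∀ᶠ s : ℝ in 𝓝[>] (0:ℝ), (0:ℝ) ≤ ⟪Q (x + s • v) - Q u, v⟫ := by
    set δ : ℝ := ε / (‖v‖ + 1) with hδ
    have hδpos : 0 < δ := div_pos hε (by positivity)
    have h1 : ∀ᶠ s : ℝ in 𝓝[>] (0:ℝ), s < δ :=
      eventually_nhdsWithin_of_eventually_nhds (tendsto_id.eventually_lt_const hδpos)
    have h2 : ∀ᶠ s : ℝ in 𝓝[>] (0:ℝ), 0 < s := self_mem_nhdsWithin
    filter_upwards [h1, h2] with s hsδ hs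
    have hzU : x + s • v ∈ U := by
      apply hball
      rw [Metric.mem_ball, dist_eq_norm]
      have : x + s • v - x = s • v := add_sub_cancel_left x (s • v)
      rw [this, norm_smul, Real.norm_eq_abs, abs_of_pos hs]
      calc s * ‖v‖ ≤ s * (‖v‖ + 1) := by nlinarith [norm_nonneg v]
        _ < δ * (‖v‖ + 1) := by nlinarith [norm_nonneg v]
        _ = ε := by rw [hδ]; exact div_mul_cancel₀ ε (by positivity)
    have hk := key _ hzU
    rw [add_sub_cancel_left, real_inner_smul_right] at hk
    nlinarith
  have hfinal : (0:ℝ) ≤ ⟪Q x - Q u, v⟫ := ge_of_tendsto hφ hev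
  rw [hv, ← neg_sub (Q x) (Q u), inner_neg_right] at hfinal
  have hzero : ⟪Q x - Q u, Q x - Q u⟫ = 0 :=
    le_antisymm (by linarith) real_inner_self_nonneg
  have := inner_self_eq_zero.mp hzero
  exact sub_eq_zero.mp this
end

section
/- Let Q : U → ℝ^K be continuous on an open convex set U and satisfy the law of demand, and let H ⊆ U be open. If the restriction of Q to H is not constant on any nondegenerate line segment contained in H, then Q is injective on H. -/
/-! If `Q u = Q w`, then for every `x` on the segment `[u, w]` the law of demand at `u` and at `w`,
averaged with the barycentric weights of `x`, gives `⟪Q z - Q u, z - x⟫ ≥ 0` for all `z` near `x`.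
Minty's trick (test with `z = x + ε (Q u - Q x)`, let `ε → 0⁺`) turns this into `Q x = Q u`, so `Q`
is constant on `[u, w]`. Two distinct points of `H` with the same image would therefore give a short
nondegenerate subsegment inside a ball around one of them, lying in `H`, on which `Q` is constant. -/

open scoped RealInnerProductSpace
open Filter Topology

section

variable {E : Type*} [NormedAddCommGroup E] [InnerProductSpace ℝ E]

theorem eq_of_eventually_inner_sub_nonneg {Q : E → E} {x c : E} (hQ : ContinuousAt Q x)
    (h : ∀ᶠ z in 𝓝 x, 0 ≤ ⟪Q z - c, z - x⟫) : Q x = c := by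
  have hpath : Tendsto (fun ε : ℝ => x + ε • (c - Q x)) (𝓝[>] 0) (𝓝 x) := by
    have hcont : Continuous fun ε : ℝ => x + ε • (c - Q x) := by fun_prop
    simpa using (hcont.tendsto 0).mono_left nhdsWithin_le_nhds
  have hdir : ∀ᶠ ε in 𝓝[>] (0 : ℝ), 0 ≤ ⟪Q (x + ε • (c - Q x)) - c, c - Q x⟫ := by
    filter_upwards [hpath.eventually h, self_mem_nhdsWithin] with ε hε (hε0 : 0 < ε)
    rw [add_sub_cancel_left, real_inner_smul_right] at hε
    exact (mul_nonneg_iff_of_pos_left hε0).mp hε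
  have hlim : Tendsto (fun ε : ℝ => ⟪Q (x + ε • (c - Q x)) - c, c - Q x⟫) (𝓝[>] 0)
      (𝓝 ⟪Q x - c, c - Q x⟫) :=
    ((hQ.tendsto.comp hpath).sub_const c).inner tendsto_const_nhds
  have hx : 0 ≤ ⟪Q x - c, c - Q x⟫ := ge_of_tendsto hlim hdir
  rw [← neg_sub c (Q x), inner_neg_left, neg_nonneg, real_inner_self_nonpos, sub_eq_zero] at hx
  exact hx.symm

theorem inner_sub_nonneg_of_mem_segment {U : Set E} {Q : E → E}
    (hLoD : ∀ u ∈ U, ∀ w ∈ U, (0 : ℝ) ≤ ⟪Q u - Q w, u - w⟫)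
    {u w x z : E} (hu : u ∈ U) (hw : w ∈ U) (hQ : Q u = Q w) (hx : x ∈ segment ℝ u w)
    (hz : z ∈ U) : 0 ≤ ⟪Q z - Q u, z - x⟫ := by
  obtain ⟨a, b, ha, hb, hab, rfl⟩ := hx
  have hsplit : z - (a • u + b • w) = a • (z - u) + b • (z - w) :=
    calc z - (a • u + b • w) = (a + b) • z - (a • u + b • w) := by rw [hab, one_smul]
      _ = a • (z - u) + b • (z - w) := by module
  rw [hsplit, inner_add_right, real_inner_smul_right, real_inner_smul_right]
  have hzu := hLoD z hz u hu
  have hzw := hLoD z hz w hw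
  rw [← hQ] at hzw
  positivity

theorem eqOn_segment_of_eq {U : Set E} (hUopen : IsOpen U) {Q : E → E}
    (hQcont : ContinuousOn Q U) (hLoD : ∀ u ∈ U, ∀ w ∈ U, (0 : ℝ) ≤ ⟪Q u - Q w, u - w⟫)
    {u w : E} (hu : u ∈ U) (hw : w ∈ U) (hsegU : segment ℝ u w ⊆ U) (hQ : Q u = Q w) :
    ∀ x ∈ segment ℝ u w, Q x = Q u := fun x hx =>
  have hxU : U ∈ 𝓝 x := hUopen.mem_nhds (hsegU hx)
  eq_of_eventually_inner_sub_nonneg (hQcont.continuousAt hxU)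
    (eventually_of_mem hxU fun _ hz => inner_sub_nonneg_of_mem_segment hLoD hu hw hQ hx hz)

end

theorem exists_segment_subset_of_mem_nhds {E : Type*} [NormedAddCommGroup E] [NormedSpace ℝ E]
    {s : Set E} {a b : E} (hs : s ∈ 𝓝 a) (hab : a ≠ b) :
    ∃ w ∈ segment ℝ a b, a ≠ w ∧ segment ℝ a w ⊆ s := by
  obtain ⟨r, hr, hball⟩ := Metric.mem_nhds_iff.mp hs
  have hnear : ∀ᶠ t in 𝓝[>] (0 : ℝ), AffineMap.lineMap a b t ∈ Metric.ball a r := by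
    have := (AffineMap.lineMap_continuous (p := a) (q := b)).tendsto (0 : ℝ)
    rw [AffineMap.lineMap_apply_zero] at this
    exact (this.mono_left nhdsWithin_le_nhds).eventually (Metric.ball_mem_nhds a hr)
  obtain ⟨t, hta, ht⟩ := (hnear.and (Ioo_mem_nhdsGT zero_lt_one)).exists
  refine ⟨_, lineMap_mem_segment ℝ a b (Set.Ioo_subset_Icc_self ht), ?_, ?_⟩
  · rw [ne_comm, Ne, AffineMap.lineMap_eq_left_iff]
    exact not_or.mpr ⟨hab, ht.1.ne'⟩
  · exact ((convex_ball a r).segment_subset (Metric.mem_ball_self hr) hta).trans hball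

theorem stmt_4 {K : ℕ} (U H : Set (EuclideanSpace ℝ (Fin K)))
    (hUopen : IsOpen U) (hUconv : Convex ℝ U)
    (Q : EuclideanSpace ℝ (Fin K) → EuclideanSpace ℝ (Fin K))
    (hQcont : ContinuousOn Q U)
    (hLoD : ∀ u ∈ U, ∀ w ∈ U, (0:ℝ) ≤ ⟪Q u - Q w, u - w⟫)
    (hHU : H ⊆ U) (hHopen : IsOpen H)
    (hseg : ∀ u ∈ H, ∀ w ∈ H, u ≠ w → segment ℝ u w ⊆ H →
      ¬ (∀ x ∈ segment ℝ u w, Q x = Q u)) :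
    Set.InjOn Q H := by
  intro a ha b hb hQab
  by_contra hab
  have hconst := eqOn_segment_of_eq hUopen hQcont hLoD (hHU ha) (hHU hb)
    (hUconv.segment_subset (hHU ha) (hHU hb)) hQab
  obtain ⟨w, hw, haw, hsegH⟩ := exists_segment_subset_of_mem_nhds (hHopen.mem_nhds ha) hab
  exact hseg a ha w (hsegH (right_mem_segment ℝ a w)) haw hsegH fun x hx =>
    hconst x ((convex_segment a b).segment_subset (left_mem_segment ℝ a b) hw hx)
end

section
/- Define Q : ℝ² → ℝ² by Q(u) = (χ_A(u), χ_A(u)), where A = {u ∈ ℝ² : u₁ + u₂ > 0} ∪ {(0,0)} and χ_A is the indicator (value 1 on A, 0 otherwise). Then Q satisfies the law of demand, but the inverse image Q⁻¹((0,0)) is not convex. -/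
open scoped RealInnerProductSpace Classical

theorem inner_indicator_sub_indicator_nonneg {E : Type*} [NormedAddCommGroup E]
    [InnerProductSpace ℝ E] (v : E) {A : Set E} (hA_nonneg : ∀ x ∈ A, 0 ≤ ⟪v, x⟫)
    (hA_pos : ∀ x, 0 < ⟪v, x⟫ → x ∈ A) (u w : E) :
    0 ≤ ⟪A.indicator (fun _ => v) u - A.indicator (fun _ => v) w, u - w⟫ := by
  have hAc_nonpos : ∀ x ∉ A, ⟪v, x⟫ ≤ 0 := fun x hx => not_lt.1 fun h => hx (hA_pos x h)
  by_cases hu : u ∈ A <;> by_cases hw : w ∈ A <;>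
    simp only [hu, hw, Set.indicator_of_mem, Set.indicator_of_notMem, not_false_eq_true, sub_self,
      zero_sub, sub_zero, inner_zero_left, inner_neg_left, inner_sub_right, le_refl]
  · linarith [hA_nonneg u hu, hAc_nonpos w hw]
  · linarith [hA_nonneg w hw, hAc_nonpos u hu]

theorem EuclideanSpace.inner_toLp_one_fin_two (x : EuclideanSpace ℝ (Fin 2)) :
    ⟪WithLp.toLp 2 (fun _ => (1 : ℝ)), x⟫ = x 0 + x 1 := by
  simp [PiLp.inner_apply, Fin.sum_univ_two]

theorem stmt_6 (A : Set (EuclideanSpace ℝ (Fin 2)))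
    (hA : A = {u : EuclideanSpace ℝ (Fin 2) | 0 < u 0 + u 1} ∪ {0})
    (Q : EuclideanSpace ℝ (Fin 2) → EuclideanSpace ℝ (Fin 2))
    (hQ : ∀ u, Q u = WithLp.toLp 2 (fun _ => if u ∈ A then (1:ℝ) else 0)) :
    (∀ u w : EuclideanSpace ℝ (Fin 2), (0:ℝ) ≤ ⟪Q u - Q w, u - w⟫) ∧
    ¬ Convex ℝ {u : EuclideanSpace ℝ (Fin 2) | Q u = 0} := by
  set v : EuclideanSpace ℝ (Fin 2) := WithLp.toLp 2 (fun _ => 1)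
  have hQ_indicator : ∀ u, Q u = A.indicator (fun _ => v) u := by
    intro u
    rw [hQ, Set.indicator_apply]
    split_ifs <;> rfl
  have hv_inner : ∀ x, ⟪v, x⟫ = x 0 + x 1 := EuclideanSpace.inner_toLp_one_fin_two
  have hv : v ≠ 0 := fun h => by simpa [v] using congrArg (· 0) h
  have hfiber : {u | Q u = 0} = Aᶜ := by
    ext u
    simp [hQ_indicator, Set.indicator_apply_eq_zero, hv]
  refine ⟨fun u w => ?_, ?_⟩
  · rw [hQ_indicator, hQ_indicator]
    refine inner_indicator_sub_indicator_nonneg v (fun x hx => ?_) (fun x hx => ?_) u w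
    · rcases hA ▸ hx with hx | rfl
      · rw [hv_inner]
        exact hx.le
      · exact (inner_zero_right v).ge
    · rw [hv_inner] at hx
      rw [hA]
      exact Or.inl hx
  · rw [hfiber]
    intro hconv
    have ha : !₂[-1, 1] ∈ Aᶜ := by simp [hA]
    have hb : !₂[1, -1] ∈ Aᶜ := by simp [hA]
    have hmid : (1 / 2 : ℝ) • !₂[(-1 : ℝ), 1] + (1 / 2 : ℝ) • !₂[1, -1] = 0 := by
      ext i; fin_cases i <;> simp
    have hmid_mem := hconv ha hb (by norm_num : (0 : ℝ) ≤ 1 / 2) (by norm_num) (add_halves 1)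
    rw [hmid] at hmid_mem
    simp [hA] at hmid_mem
end

section
/- Let Q : U → ℝ^K be differentiable on an open convex set U ⊆ ℝ^K. Then Q satisfies the law of demand on U if and only if for every u ∈ U the Jacobian J(u) (the derivative of Q at u) is weakly quasi-definite, i.e., ⟪v, J(u) v⟫ ≥ 0 for all v ∈ ℝ^K. -/
open scoped RealInnerProductSpace Topology
open Filter Set

/-!
Restricted to a line `t ↦ a + t • v`, the scalar function `t ↦ ⟪Q (a + t • v), v⟫` has derivative
`⟪J v, v⟫`. Monotonicity of `Q` says exactly that these restrictions are nondecreasing, so the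
derivative is nonnegative; conversely, a nonnegative derivative along the segment from `y` to `x`,
which stays in the convex set `U`, makes the restriction nondecreasing, and its increment over
`[0, 1]` is `⟪Q x - Q y, x - y⟫`.
-/

lemma HasDerivAt.nonneg_of_eventually_le {h : ℝ → ℝ} {d a : ℝ} (hd : HasDerivAt h d a)
    (hle : ∀ᶠ t in 𝓝[>] a, h a ≤ h t) : 0 ≤ d := by
  have hslope : Tendsto (slope h a) (𝓝[>] a) (𝓝 d) :=
    (hasDerivAt_iff_tendsto_slope.mp hd).mono_left (nhdsWithin_mono a fun _ ht => ne_of_gt ht)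
  refine ge_of_tendsto hslope ?_
  filter_upwards [hle, self_mem_nhdsWithin] with t ht hat
  rw [slope_def_field]
  exact div_nonneg (sub_nonneg.mpr ht) (sub_nonneg.mpr (le_of_lt hat))

variable {E : Type*} [NormedAddCommGroup E] [InnerProductSpace ℝ E]

lemma hasDerivAt_inner_comp_line {Q : E → E} {J : E →L[ℝ] E} {a v : E} {t : ℝ}
    (hQ : HasFDerivAt Q J (a + t • v)) :
    HasDerivAt (fun s : ℝ => ⟪Q (a + s • v), v⟫) ⟪J v, v⟫ t := by
  have hline : HasDerivAt (fun s : ℝ => a + s • v) v t := by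
    simpa using ((hasDerivAt_id t).smul_const v).const_add a
  simpa using (hQ.comp_hasDerivAt t hline).inner ℝ (hasDerivAt_const t v)

lemma inner_apply_self_nonneg_of_monotone {U : Set E} {Q : E → E} {J : E →L[ℝ] E} {u : E}
    (hU : U ∈ 𝓝 u) (hmon : ∀ x ∈ U, ∀ y ∈ U, 0 ≤ ⟪Q x - Q y, x - y⟫)
    (hQ : HasFDerivAt Q J u) (v : E) : 0 ≤ ⟪v, J v⟫ := by
  have hline : Tendsto (fun t : ℝ => u + t • v) (𝓝 0) (𝓝 u) :=
    (by fun_prop : Continuous fun t : ℝ => u + t • v).tendsto' 0 u (by simp)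
  have hmemU : ∀ᶠ t in 𝓝[>] (0 : ℝ), u + t • v ∈ U :=
    nhdsWithin_le_nhds (hline.eventually hU)
  have hle : ∀ᶠ t in 𝓝[>] (0 : ℝ), ⟪Q (u + (0 : ℝ) • v), v⟫ ≤ ⟪Q (u + t • v), v⟫ := by
    filter_upwards [hmemU, self_mem_nhdsWithin] with t ht (htpos : 0 < t)
    have hmul : t * ⟪Q u, v⟫ ≤ t * ⟪Q (u + t • v), v⟫ := by
      simpa [inner_sub_left, real_inner_smul_right] using hmon _ ht u (mem_of_mem_nhds hU)
    simpa using le_of_mul_le_mul_left hmul htpos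
  rw [real_inner_comm]
  exact (hasDerivAt_inner_comp_line (by simpa using hQ)).nonneg_of_eventually_le hle

lemma monotone_of_inner_apply_self_nonneg {U : Set E} {Q : E → E} {J : E → E →L[ℝ] E}
    (hU : Convex ℝ U) (hQ : ∀ x ∈ U, HasFDerivAt Q (J x) x)
    (hJ : ∀ x ∈ U, ∀ v, 0 ≤ ⟪v, J x v⟫) : ∀ x ∈ U, ∀ y ∈ U, 0 ≤ ⟪Q x - Q y, x - y⟫ := by
  intro x hx y hy
  set φ : ℝ → ℝ := fun t => ⟪Q (y + t • (x - y)), x - y⟫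
  have hsegment : ∀ t ∈ Icc (0 : ℝ) 1, y + t • (x - y) ∈ U :=
    fun t ht => hU.add_smul_sub_mem hy hx ht
  have hderiv : ∀ t ∈ Icc (0 : ℝ) 1, HasDerivAt φ ⟪J (y + t • (x - y)) (x - y), x - y⟫ t :=
    fun t ht => hasDerivAt_inner_comp_line (hQ _ (hsegment t ht))
  have hmono : MonotoneOn φ (Icc 0 1) := by
    refine monotoneOn_of_hasDerivWithinAt_nonneg
      (f' := fun t => ⟪J (y + t • (x - y)) (x - y), x - y⟫) (convex_Icc 0 1)
      (fun t ht => (hderiv t ht).continuousAt.continuousWithinAt) (fun t ht => ?_) (fun t ht => ?_)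
    · rw [interior_Icc] at ht ⊢
      exact (hderiv t (Ioo_subset_Icc_self ht)).hasDerivWithinAt
    · rw [interior_Icc] at ht; rw [real_inner_comm]
      exact hJ _ (hsegment t (Ioo_subset_Icc_self ht)) _
  have h01 : φ 0 ≤ φ 1 :=
    hmono (left_mem_Icc.mpr zero_le_one) (right_mem_Icc.mpr zero_le_one) zero_le_one
  simpa [φ, inner_sub_left] using h01

theorem stmt_7 {K : ℕ} (U : Set (EuclideanSpace ℝ (Fin K)))
    (hUopen : IsOpen U) (hUconv : Convex ℝ U)
    (Q : EuclideanSpace ℝ (Fin K) → EuclideanSpace ℝ (Fin K))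
    (J : EuclideanSpace ℝ (Fin K) →
      EuclideanSpace ℝ (Fin K) →L[ℝ] EuclideanSpace ℝ (Fin K))
    (hdiff : ∀ u ∈ U, HasFDerivAt Q (J u) u) :
    (∀ u ∈ U, ∀ w ∈ U, (0:ℝ) ≤ ⟪Q u - Q w, u - w⟫) ↔
      (∀ u ∈ U, ∀ v, (0:ℝ) ≤ ⟪v, J u v⟫) :=
  ⟨fun hmon u hu => inner_apply_self_nonneg_of_monotone (hUopen.mem_nhds hu) hmon (hdiff u hu),
    monotone_of_inner_apply_self_nonneg hUconv hdiff⟩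
end

section
/- Let Q : U → ℝ^K be differentiable on an open convex set U and satisfy the law of demand. Let H ⊆ U be open. If the derivative (Jacobian) of Q is invertible at every point of H, then Q is injective on H. -/
open scoped RealInnerProductSpace

theorem stmt_8 {K : ℕ} (U H : Set (EuclideanSpace ℝ (Fin K)))
    (hUopen : IsOpen U) (hUconv : Convex ℝ U)
    (Q : EuclideanSpace ℝ (Fin K) → EuclideanSpace ℝ (Fin K))
    (J : EuclideanSpace ℝ (Fin K) →
      EuclideanSpace ℝ (Fin K) →L[ℝ] EuclideanSpace ℝ (Fin K))
    (hdiff : ∀ u ∈ U, HasFDerivAt Q (J u) u)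
    (hLoD : ∀ u ∈ U, ∀ w ∈ U, (0:ℝ) ≤ ⟪Q u - Q w, u - w⟫)
    (hHU : H ⊆ U) (hHopen : IsOpen H)
    (hJinv : ∀ u ∈ H, Function.Bijective (J u)) :
    Set.InjOn Q H := by
  intro a ha b hb hab
  -- Q is constant (equal to Q a) on the segment from a to b
  have key : ∀ t ∈ Set.Icc (0:ℝ) 1, Q (a + t • (b - a)) = Q a := by
    intro t ht
    set u := a + t • (b - a) with hu
    have huU : u ∈ U := by
      have h : u = (1 - t) • a + t • b := by rw [hu]; module
      rw [h]
      exact hUconv (hHU ha) (hHU hb) (by linarith [ht.2]) ht.1 (by ring)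
    have h2 : ∀ w ∈ U, (0:ℝ) ≤ ⟪Q w - Q a, w - u⟫ := by
      intro w hw
      have hdecomp : w - u = (1 - t) • (w - a) + t • (w - b) := by
        rw [hu]; module
      rw [hdecomp, inner_add_right, real_inner_smul_right, real_inner_smul_right]
      nth_rewrite 2 [hab]
      have h1 := hLoD w hw a (hHU ha)
      have h2' := hLoD w hw b (hHU hb)
      have t1 : (0:ℝ) ≤ (1 - t) * ⟪Q w - Q a, w - a⟫ :=
        mul_nonneg (by linarith [ht.2]) h1
      have t2 : (0:ℝ) ≤ t * ⟪Q w - Q b, w - b⟫ := mul_nonneg ht.1 h2'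
      linarith
    have h3 : ∀ v, (0:ℝ) ≤ ⟪Q u - Q a, v⟫ := by
      intro v
      have hcont : ContinuousAt Q u := (hdiff u huU).continuousAt
      have hmap : Continuous (fun s : ℝ => u + s • v) := by continuity
      have htend : Filter.Tendsto (fun s : ℝ => ⟪Q (u + s • v) - Q a, v⟫)
          (nhdsWithin 0 (Set.Ioi 0)) (nhds ⟪Q u - Q a, v⟫) := by
        apply Filter.Tendsto.mono_left _ nhdsWithin_le_nhds
        have hc1 : ContinuousAt (fun s : ℝ => Q (u + s • v)) 0 := by
          apply ContinuousAt.comp _ hmap.continuousAt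
          simpa using hcont
        have hca : ContinuousAt (fun s : ℝ => ⟪Q (u + s • v) - Q a, v⟫) 0 :=
          ContinuousAt.inner (hc1.sub continuousAt_const) continuousAt_const
        have := hca.tendsto
        simpa using this
      apply ge_of_tendsto htend
      have hmem : ∀ᶠ s in nhdsWithin (0:ℝ) (Set.Ioi 0), u + s • v ∈ U := by
        have h' : ∀ᶠ s in nhds (0:ℝ), u + s • v ∈ U := by
          have h0 : (fun s : ℝ => u + s • v) 0 ∈ U := by simpa using huU
          exact hmap.continuousAt.preimage_mem_nhds (hUopen.mem_nhds h0)
        exact h'.filter_mono nhdsWithin_le_nhds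
      filter_upwards [hmem, self_mem_nhdsWithin] with s hsU hs
      have hw := h2 _ hsU
      have hsub : (u + s • v) - u = s • v := by module
      rw [hsub, real_inner_smul_right] at hw
      have hs' : (0:ℝ) < s := hs
      nlinarith
    have h4 := h3 (Q a - Q u)
    have hneg : Q a - Q u = -(Q u - Q a) := by module
    rw [hneg, inner_neg_right] at h4
    have h5 : ⟪Q u - Q a, Q u - Q a⟫ = 0 :=
      le_antisymm (by linarith) real_inner_self_nonneg
    have h6 : Q u - Q a = 0 := by rwa [inner_self_eq_zero] at h5
    exact sub_eq_zero.mp h6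
  -- differentiate the constant curve at 0
  have hL : HasDerivAt (fun t : ℝ => a + t • (b - a)) (b - a) 0 := by
    have h1 : HasDerivAt (fun t : ℝ => t • (b - a)) ((1:ℝ) • (b - a)) 0 :=
      (hasDerivAt_id (0:ℝ)).smul_const (b - a)
    simpa using h1.const_add a
  have hγ : HasDerivAt (fun t : ℝ => Q (a + t • (b - a))) (J a (b - a)) 0 := by
    have ha' : HasFDerivAt Q (J a) ((fun t : ℝ => a + t • (b - a)) 0) := by
      simpa using hdiff a (hHU ha)
    exact ha'.comp_hasDerivAt 0 hL
  have h1 : HasDerivWithinAt (fun t : ℝ => Q (a + t • (b - a))) (J a (b - a))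
      (Set.Icc 0 1) 0 := hγ.hasDerivWithinAt
  have h2 : HasDerivWithinAt (fun t : ℝ => Q (a + t • (b - a))) 0
      (Set.Icc 0 1) 0 :=
    (hasDerivWithinAt_const (0:ℝ) (Set.Icc 0 1) (Q a)).congr
      (fun t ht => key t ht) (key 0 ⟨le_rfl, zero_le_one⟩)
  have hud : UniqueDiffWithinAt ℝ (Set.Icc (0:ℝ) 1) 0 :=
    (uniqueDiffOn_Icc one_pos) 0 ⟨le_rfl, zero_le_one⟩
  have hzero : J a (b - a) = 0 := by
    have e1 := h1.derivWithin hud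
    have e2 := h2.derivWithin hud
    rw [← e1, e2]
  have hba : b - a = 0 := (hJinv a ha).injective (by simpa using hzero)
  have : b = a := sub_eq_zero.mp hba
  exact this.symm
end

section
/- Let Q : U → ℝ^K be differentiable on an open convex set U with everywhere weakly quasi-definite Jacobian (i.e., v ⬝ J(u)v ≥ 0 for all u ∈ U, v ∈ ℝ^K). Then Q is injective if and only if for every u ∈ U and every nonzero v ∈ ℝ^K there exists λ ∈ [0,1] with u + λv ∈ U such that J(u + λv)v ≠ 0. -/
open scoped RealInnerProductSpace

set_option maxHeartbeats 2000000 in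
theorem stmt_10 {K : ℕ} (U : Set (EuclideanSpace ℝ (Fin K)))
    (hUopen : IsOpen U) (hUconv : Convex ℝ U)
    (Q : EuclideanSpace ℝ (Fin K) → EuclideanSpace ℝ (Fin K))
    (J : EuclideanSpace ℝ (Fin K) →
      EuclideanSpace ℝ (Fin K) →L[ℝ] EuclideanSpace ℝ (Fin K))
    (hdiff : ∀ u ∈ U, HasFDerivAt Q (J u) u)
    (hquasi : ∀ u ∈ U, ∀ v, (0:ℝ) ≤ ⟪v, J u v⟫) :
    Set.InjOn Q U ↔
      ∀ u ∈ U, ∀ v : EuclideanSpace ℝ (Fin K), v ≠ 0 →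
        ∃ l ∈ Set.Icc (0:ℝ) 1, u + l • v ∈ U ∧ J (u + l • v) v ≠ 0 := by
  have hpath : ∀ (a v : EuclideanSpace ℝ (Fin K)) (t : ℝ), a + t • v ∈ U →
      HasDerivAt (fun s : ℝ => Q (a + s • v)) (J (a + t • v) v) t := by
    intro a v t hmem
    have hc : HasDerivAt (fun s : ℝ => a + s • v) v t := by
      simpa using ((hasDerivAt_id t).smul_const v).const_add a
    exact (hdiff _ hmem).comp_hasDerivAt t hc
  have mono : ∀ x ∈ U, ∀ y ∈ U, (0:ℝ) ≤ ⟪y - x, Q y - Q x⟫ := by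
    intro x hx y hy
    set v := y - x with hv
    have hmem : ∀ t ∈ Set.Icc (0:ℝ) 1, x + t • v ∈ U := fun t ht =>
      hUconv.add_smul_sub_mem hx hy ht
    have hd : ∀ t ∈ Set.Icc (0:ℝ) 1,
        HasDerivAt (fun s : ℝ => ⟪v, Q (x + s • v)⟫) ⟪v, J (x + t • v) v⟫ t := by
      intro t ht
      have := (hasDerivAt_const t v).inner ℝ (hpath x v t (hmem t ht))
      simpa using this
    have hmono : MonotoneOn (fun s : ℝ => ⟪v, Q (x + s • v)⟫) (Set.Icc 0 1) := by
      apply monotoneOn_of_deriv_nonneg (convex_Icc 0 1)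
      · exact fun t ht => (hd t ht).continuousAt.continuousWithinAt
      · intro t ht
        rw [interior_Icc] at ht
        exact ((hd t (Set.Ioo_subset_Icc_self ht)).differentiableAt).differentiableWithinAt
      · intro t ht
        rw [interior_Icc] at ht
        rw [(hd t (Set.Ioo_subset_Icc_self ht)).deriv]
        exact hquasi _ (hmem t (Set.Ioo_subset_Icc_self ht)) v
    have h01 := hmono (Set.left_mem_Icc.2 zero_le_one) (Set.right_mem_Icc.2 zero_le_one)
      zero_le_one
    simp only [zero_smul, add_zero, one_smul] at h01
    have e1 : x + v = y := by rw [hv]; abel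
    rw [e1] at h01
    rw [inner_sub_right]
    linarith
  constructor
  · -- forward
    intro hinj u hu v hv
    by_contra hcon
    push_neg at hcon
    have hcont : Continuous (fun t : ℝ => u + t • v) := by continuity
    have hopen : IsOpen ((fun t : ℝ => u + t • v) ⁻¹' U) := hUopen.preimage hcont
    have h0 : (0:ℝ) ∈ (fun t : ℝ => u + t • v) ⁻¹' U := by simpa using hu
    rcases Metric.isOpen_iff.1 hopen 0 h0 with ⟨δ, hδ, hball⟩
    set ε : ℝ := min 1 (δ / 2) with hεdef
    have hε0 : 0 < ε := lt_min one_pos (half_pos hδ)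
    have hεle1 : ε ≤ 1 := min_le_left _ _
    have hmem : ∀ t ∈ Set.Icc (0:ℝ) ε, u + t • v ∈ U := by
      intro t ht
      apply hball
      rw [Metric.mem_ball, Real.dist_eq, sub_zero, abs_of_nonneg ht.1]
      have : t ≤ δ / 2 := le_trans ht.2 (min_le_right _ _)
      linarith
    have hzero : ∀ t ∈ Set.Icc (0:ℝ) ε, J (u + t • v) v = 0 := by
      intro t ht
      exact hcon t ⟨ht.1, le_trans ht.2 hεle1⟩ (hmem t ht)
    have hderiv0 : ∀ t ∈ Set.Icc (0:ℝ) ε, HasDerivWithinAt (fun s : ℝ => Q (u + s • v))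
        ((fun _ : ℝ => (0 : EuclideanSpace ℝ (Fin K))) t) (Set.Icc (0:ℝ) ε) t := by
      intro t ht
      have h1 := (hpath u v t (hmem t ht)).hasDerivWithinAt (s := Set.Icc 0 ε)
      rwa [hzero t ht] at h1
    have key : ‖Q (u + ε • v) - Q (u + (0:ℝ) • v)‖ ≤ 0 * ‖ε - 0‖ :=
      Convex.norm_image_sub_le_of_norm_hasDerivWithin_le hderiv0
        (fun t _ => by simp) (convex_Icc (0:ℝ) ε) ⟨le_refl 0, hε0.le⟩ ⟨hε0.le, le_refl ε⟩
    rw [zero_mul] at key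
    have hQeq : Q (u + ε • v) = Q u := by
      have := norm_le_zero_iff.1 key
      rw [sub_eq_zero] at this
      simpa using this
    have := hinj (hmem ε ⟨hε0.le, le_refl ε⟩) hu hQeq
    have : ε • v = 0 := by
      have h := this
      rwa [add_eq_left] at h
    rcases smul_eq_zero.1 this with h | h
    · exact hε0.ne' h
    · exact hv h
  · -- backward
    intro hyp a ha b hb hQ
    by_contra hne
    have hv : b - a ≠ 0 := sub_ne_zero.2 fun h => hne h.symm
    obtain ⟨l, hl, hzU, hJz⟩ := hyp a ha (b - a) hv
    set v : EuclideanSpace ℝ (Fin K) := b - a with hvdef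
    set z : EuclideanSpace ℝ (Fin K) := a + l • v with hzdef
    have step1 : ∀ t ∈ Set.Icc (0:ℝ) 1, ⟪v, Q (a + t • v) - Q a⟫ = 0 := by
      intro t ht
      rcases eq_or_lt_of_le ht.1 with h0 | h0
      · simp [← h0]
      rcases eq_or_lt_of_le ht.2 with h1 | h1
      · have e : a + t • v = b := by rw [h1, one_smul, hvdef]; abel
        rw [e, hQ, sub_self, inner_zero_right]
      · have hw : a + t • v ∈ U := hUconv.add_smul_sub_mem ha hb ⟨ht.1, ht.2⟩
        have m1 := mono a ha _ hw
        have m2 := mono _ hw b hb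
        have e1 : a + t • v - a = t • v := by abel
        have e2 : b - (a + t • v) = (1 - t) • v := by
          rw [sub_smul, one_smul, hvdef]; abel
        rw [e1, real_inner_smul_left] at m1
        rw [e2, real_inner_smul_left] at m2
        have hQb : Q b - Q (a + t • v) = -(Q (a + t • v) - Q a) := by rw [hQ]; abel
        rw [hQb, inner_neg_right] at m2
        apply le_antisymm
        · nlinarith [m2, h1]
        · nlinarith [m1, h0]
    have hQz : ⟪v, Q z - Q a⟫ = 0 := step1 l hl
    have fmin : ∀ p ∈ U, (0:ℝ) ≤ ⟪Q p - Q a, p - a⟫ := fun p hp => by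
      have := mono a ha p hp
      rwa [real_inner_comm] at this
    have fmin' : ∀ p ∈ U, (0:ℝ) ≤ ⟪Q p - Q b, p - b⟫ := fun p hp => by
      have := mono b hb p hp
      rwa [real_inner_comm] at this
    have g1z : ⟪Q z - Q a, z - a⟫ = 0 := by
      have e : z - a = l • v := by rw [hzdef]; abel
      rw [e, real_inner_comm, real_inner_smul_left, hQz, mul_zero]
    have g2z : ⟪Q z - Q b, z - b⟫ = 0 := by
      have e : z - b = (l - 1) • v := by rw [hzdef, sub_smul, one_smul, hvdef]; abel
      rw [← hQ, e, real_inner_comm, real_inner_smul_left, hQz, mul_zero]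
    have hD : ∀ c : EuclideanSpace ℝ (Fin K),
        (∀ p ∈ U, (0:ℝ) ≤ ⟪Q p - Q c, p - c⟫) → ⟪Q z - Q c, z - c⟫ = 0 →
        ∀ u, ⟪Q z - Q c, u⟫ + ⟪J z u, z - c⟫ = 0 := by
      intro c hnn hzero u
      have hf : HasFDerivAt (fun p => Q p - Q c) (J z) z := (hdiff z hzU).sub_const _
      have hg : HasFDerivAt (fun p : EuclideanSpace ℝ (Fin K) => p - c)
          (ContinuousLinearMap.id ℝ _) z := (hasFDerivAt_id z).sub_const _
      have hgi := hf.inner ℝ hg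
      have hlm : IsLocalMin (fun p => ⟪Q p - Q c, p - c⟫) z := by
        have hev : ∀ᶠ p in nhds z, (0:ℝ) ≤ ⟪Q p - Q c, p - c⟫ :=
          Filter.eventually_of_mem (hUopen.mem_nhds hzU) hnn
        refine hev.mono fun p hp => ?_
        simpa [hzero] using hp
      have hDz := hlm.hasFDerivAt_eq_zero hgi
      have happ := congrArg (fun L : EuclideanSpace ℝ (Fin K) →L[ℝ] ℝ => L u) hDz
      simpa [fderivInnerCLM_apply, real_inner_comm] using happ
    have h1 := hD a fmin g1z
    have h2 := hD b fmin' g2z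
    have key2 : ∀ u, ⟪J z u, v⟫ = 0 := by
      intro u
      have h1u := h1 u
      have h2u := h2 u
      rw [← hQ] at h2u
      have hsub : ⟪J z u, z - a⟫ - ⟪J z u, z - b⟫ = ⟪J z u, v⟫ := by
        rw [← inner_sub_right]
        congr 1
        rw [hvdef]; abel
      linarith
    have hvJv : ⟪v, J z v⟫ = 0 := by rw [real_inner_comm]; exact key2 v
    have key3 : ∀ u, ⟪u, J z v⟫ = 0 := by
      intro u
      set c : ℝ := ⟪u, J z v⟫ with hc
      set d : ℝ := ⟪u, J z u⟫ with hd'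
      have hd : 0 ≤ d := hquasi z hzU u
      have hq : ∀ t : ℝ, 0 ≤ t * c + t ^ 2 * d := by
        intro t
        have hQ0 := hquasi z hzU (v + t • u)
        have hvu : ⟪v, J z u⟫ = 0 := by rw [real_inner_comm]; exact key2 u
        have expand : ⟪v + t • u, J z (v + t • u)⟫ = t * c + t ^ 2 * d := by
          rw [map_add, map_smul, inner_add_left, inner_add_right, inner_add_right,
            real_inner_smul_left, real_inner_smul_left, real_inner_smul_right,
            real_inner_smul_right, hvJv, hvu, hc, hd']
          ring
        rwa [expand] at hQ0
      have hd1 : (0:ℝ) < d + 1 := by linarith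
      have hc2 : c ^ 2 ≤ 0 := by
        have ht := hq (-c / (d + 1))
        have hne' : (d + 1) ≠ 0 := ne_of_gt hd1
        have e : -c / (d + 1) * c + (-c / (d + 1)) ^ 2 * d = -c ^ 2 / (d + 1) ^ 2 := by
          field_simp
          ring
        rw [e] at ht
        have h3 := (le_div_iff₀ (by positivity : (0:ℝ) < (d + 1) ^ 2)).1 ht
        nlinarith [h3]
      have : c = 0 := by nlinarith [sq_nonneg c]
      exact this
    have hJzero : J z v = 0 := inner_self_eq_zero.1 (key3 (J z v))
    exact hJz hJzero
end

section
/- Let Q(u) = A u where A is the 2×2 matrix with rows (2,1) and (1,2). Then Q satisfies the law of demand on ℝ², but Q does not satisfy inverse isotonicity: there exist u, ũ with Q(ũ) ≥ Q(u) componentwise but not ũ ≥ u componentwise (e.g., u = (0,0), ũ = (2,-1)). -/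
open Matrix
theorem stmt_11 (A : Matrix (Fin 2) (Fin 2) ℝ) (hA : A = !![2, 1; 1, 2])
    (Q : (Fin 2 → ℝ) → (Fin 2 → ℝ)) (hQ : ∀ u, Q u = A.mulVec u) :
    (∀ u w : Fin 2 → ℝ, (0:ℝ) ≤ (Q u - Q w) ⬝ᵥ (u - w)) ∧
    ¬ (∀ u w : Fin 2 → ℝ, (∀ i, Q u i ≤ Q w i) → ∀ i, u i ≤ w i) := by
  subst hA
  constructor
  · intro u w
    simp only [hQ, mulVec, dotProduct, Fin.sum_univ_two]
    simp [Pi.sub_apply, Matrix.cons_val_zero, Matrix.cons_val_one, Matrix.head_cons, Matrix.vecHead, Matrix.vecTail, Function.comp,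
      Matrix.cons_val', Matrix.empty_val']
    nlinarith [sq_nonneg (u 0 - w 0), sq_nonneg (u 1 - w 1), sq_nonneg (u 0 - w 0 + (u 1 - w 1))]
  · intro h
    have := h ![0, 0] ![2, -1] (by
      intro i
      simp only [hQ, mulVec, dotProduct, Fin.sum_univ_two]
      fin_cases i <;> norm_num) 1
    norm_num at this
end

section
/- Let Q : U → ℝ^K be continuous on an open convex set U and satisfy the law of demand. Let f : T → U be a homeomorphism from an open convex set T ⊆ ℝ^K onto U, and define Q̃ = Q ∘ f. Then Q̃ is injective if and only if Q̃ is locally injective. -/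
open scoped RealInnerProductSpace
open Filter Topology

/-- Fibers of a continuous monotone map on an open convex set are convex. -/
lemma fiber_convex_of_monotone {K : ℕ} {U : Set (EuclideanSpace ℝ (Fin K))}
    (hUopen : IsOpen U) (hUconv : Convex ℝ U)
    {Q : EuclideanSpace ℝ (Fin K) → EuclideanSpace ℝ (Fin K)}
    (hQcont : ContinuousOn Q U)
    (hLoD : ∀ u ∈ U, ∀ w ∈ U, (0:ℝ) ≤ ⟪Q u - Q w, u - w⟫)
    (c : EuclideanSpace ℝ (Fin K)) :
    Convex ℝ {u | u ∈ U ∧ Q u = c} := by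
  rintro u ⟨huU, huc⟩ w ⟨hwU, hwc⟩ a b ha hb hab
  have hvU : a • u + b • w ∈ U := hUconv huU hwU ha hb hab
  set v := a • u + b • w with hv
  refine ⟨hvU, ?_⟩
  have key : ∀ z ∈ U, (0:ℝ) ≤ ⟪Q z - c, z - v⟫ := by
    intro z hz
    have h1 : (0:ℝ) ≤ ⟪Q z - c, z - u⟫ := by
      have := hLoD z hz u huU; rwa [huc] at this
    have h2 : (0:ℝ) ≤ ⟪Q z - c, z - w⟫ := by
      have := hLoD z hz w hwU; rwa [hwc] at this
    have hzv : z - v = a • (z - u) + b • (z - w) := by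
      calc z - v = (a + b) • z - (a • u + b • w) := by rw [hab, one_smul, hv]
        _ = a • (z - u) + b • (z - w) := by
            rw [add_smul, smul_sub, smul_sub]; abel
    rw [hzv, inner_add_right, inner_smul_right, inner_smul_right]
    exact add_nonneg (mul_nonneg ha h1) (mul_nonneg hb h2)
  have hQv : ∀ d, (0:ℝ) ≤ ⟪Q v - c, d⟫ := by
    intro d
    have hcont : ContinuousAt Q v := hQcont.continuousAt (hUopen.mem_nhds hvU)
    have hpath : Tendsto (fun t : ℝ => v + t • d) (𝓝[>] 0) (𝓝 v) := by
      have hc : Continuous fun t : ℝ => v + t • d := continuous_const.add (continuous_id.smul continuous_const)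
      have h0 : Tendsto (fun t : ℝ => v + t • d) (𝓝 0) (𝓝 v) := by
        have := hc.tendsto 0
        simpa using this
      exact h0.mono_left nhdsWithin_le_nhds
    have hQt : Tendsto (fun t : ℝ => ⟪Q (v + t • d) - c, d⟫) (𝓝[>] 0)
        (𝓝 ⟪Q v - c, d⟫) := by
      have h1 : Tendsto (fun t : ℝ => Q (v + t • d)) (𝓝[>] 0) (𝓝 (Q v)) :=
        hcont.tendsto.comp hpath
      have h2 : Continuous fun x : EuclideanSpace ℝ (Fin K) => ⟪x - c, d⟫ :=
        Continuous.inner (continuous_id.sub continuous_const) continuous_const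
      exact (h2.tendsto (Q v)).comp h1
    refine ge_of_tendsto hQt ?_
    have hmem : ∀ᶠ t in 𝓝[>] (0:ℝ), v + t • d ∈ U :=
      hpath.eventually (hUopen.eventually_mem hvU)
    filter_upwards [hmem, self_mem_nhdsWithin] with t htU ht
    have h := key _ htU
    have hsub : v + t • d - v = t • d := by abel
    rw [hsub, inner_smul_right] at h
    have ht' : (0:ℝ) < t := ht
    nlinarith [h]
  have hz : ∀ d, ⟪Q v - c, d⟫ = (0:ℝ) := by
    intro d
    have h1 := hQv d
    have h2 := hQv (-d)
    rw [inner_neg_right] at h2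
    linarith
  have : Q v - c = 0 := by
    have := hz (Q v - c)
    rwa [real_inner_self_eq_norm_sq, pow_eq_zero_iff (by norm_num), norm_eq_zero] at this
  exact sub_eq_zero.mp this

theorem stmt_15 {K : ℕ} (U T : Set (EuclideanSpace ℝ (Fin K)))
    (hUopen : IsOpen U) (hUconv : Convex ℝ U)
    (hTopen : IsOpen T) (hTconv : Convex ℝ T)
    (Q : EuclideanSpace ℝ (Fin K) → EuclideanSpace ℝ (Fin K))
    (hQcont : ContinuousOn Q U)
    (hLoD : ∀ u ∈ U, ∀ w ∈ U, (0:ℝ) ≤ ⟪Q u - Q w, u - w⟫)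
    (f g : EuclideanSpace ℝ (Fin K) → EuclideanSpace ℝ (Fin K))
    (hfcont : ContinuousOn f T) (hgcont : ContinuousOn g U)
    (hfT : Set.MapsTo f T U) (hgU : Set.MapsTo g U T)
    (hgf : ∀ t ∈ T, g (f t) = t) (hfg : ∀ u ∈ U, f (g u) = u) :
    Set.InjOn (Q ∘ f) T ↔
      ∀ t ∈ T, ∃ N ∈ nhds t, Set.InjOn (Q ∘ f) (N ∩ T) := by
  constructor
  · intro hinj t ht
    exact ⟨Set.univ, Filter.univ_mem, by simpa using hinj⟩
  · intro hloc t₁ ht₁ t₂ ht₂ heq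
    simp only [Function.comp] at heq
    set c := Q (f t₁) with hc
    -- fiber of Q in U
    set SQ : Set (EuclideanSpace ℝ (Fin K)) := {u | u ∈ U ∧ Q u = c} with hSQ
    have hSQconv : Convex ℝ SQ :=
      fiber_convex_of_monotone hUopen hUconv hQcont hLoD c
    -- fiber of Q ∘ f in T
    set S : Set (EuclideanSpace ℝ (Fin K)) := {t | t ∈ T ∧ Q (f t) = c} with hS
    have hgimg : g '' SQ = S := by
      ext x
      constructor
      · rintro ⟨u, ⟨huU, huc⟩, rfl⟩
        exact ⟨hgU huU, by rw [hfg u huU, huc]⟩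
      · rintro ⟨hxT, hxc⟩
        exact ⟨f x, ⟨hfT hxT, hxc⟩, hgf x hxT⟩
    have hSconn : IsPreconnected S := by
      rw [← hgimg]
      exact (hSQconv.isPreconnected).image g
        (hgcont.mono (fun u hu => hu.1))
    have ht₁S : t₁ ∈ S := ⟨ht₁, rfl⟩
    have ht₂S : t₂ ∈ S := ⟨ht₂, heq.symm⟩
    obtain ⟨N, hN, hNinj⟩ := hloc t₁ ht₁
    have hNS : ∀ y ∈ N ∩ S, y = t₁ := by
      rintro y ⟨hyN, hyT, hyc⟩
      have ht₁N : t₁ ∈ N := mem_of_mem_nhds hN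
      exact hNinj ⟨hyN, hyT⟩ ⟨ht₁N, ht₁⟩ (by simp [Function.comp, hyc, hc])
    by_contra hne
    have hcover : S ⊆ interior N ∪ {t₁}ᶜ := by
      intro x hx
      by_cases hxt : x = t₁
      · left; rw [hxt]; exact mem_interior_iff_mem_nhds.mpr hN
      · right; exact hxt
    have h1 : (S ∩ interior N).Nonempty :=
      ⟨t₁, ht₁S, mem_interior_iff_mem_nhds.mpr hN⟩
    have h2 : (S ∩ {t₁}ᶜ).Nonempty := ⟨t₂, ht₂S, fun h => hne h.symm⟩
    obtain ⟨y, hyS, hyN, hyne⟩ :=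
      hSconn _ _ isOpen_interior (isOpen_compl_singleton) hcover h1 h2
    exact hyne (hNS y ⟨interior_subset hyN, hyS⟩)
end

section
/- Let Q : U → ℝ^K be continuous on an open convex set U and satisfy the law of demand. Let f(u) = A u + b be an affine map from an open convex set T ⊆ ℝ^K into U, and define Q̃ = Q ∘ f. Then for every y ∈ ℝ^K the fiber Q̃⁻¹(y) = {u ∈ T : Q̃(u) = y} is convex; consequently Q̃ is injective if and only if the only line segments in T on which Q̃ is constant are points. -/
open scoped RealInnerProductSpace

theorem stmt_16 {K : ℕ} (U T : Set (EuclideanSpace ℝ (Fin K)))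
    (hUopen : IsOpen U) (hUconv : Convex ℝ U)
    (hTopen : IsOpen T) (hTconv : Convex ℝ T)
    (Q : EuclideanSpace ℝ (Fin K) → EuclideanSpace ℝ (Fin K))
    (hQcont : ContinuousOn Q U)
    (hLoD : ∀ u ∈ U, ∀ w ∈ U, (0:ℝ) ≤ ⟪Q u - Q w, u - w⟫)
    (A : EuclideanSpace ℝ (Fin K) →ₗ[ℝ] EuclideanSpace ℝ (Fin K))
    (b : EuclideanSpace ℝ (Fin K))
    (f : EuclideanSpace ℝ (Fin K) → EuclideanSpace ℝ (Fin K))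
    (hf : ∀ u, f u = A u + b) (hfT : Set.MapsTo f T U) :
    (∀ y : EuclideanSpace ℝ (Fin K), Convex ℝ {u ∈ T | Q (f u) = y}) ∧
    (Set.InjOn (Q ∘ f) T ↔
      ∀ u ∈ T, ∀ w ∈ T, (∀ x ∈ segment ℝ u w, Q (f x) = Q (f u)) → u = w) := by
  -- fibers of Q on U are convex
  have hfib : ∀ y, Convex ℝ {z ∈ U | Q z = y} := by
    intro y u hu w hw a c ha hc hac
    have hxU : a • u + c • w ∈ U := hUconv hu.1 hw.1 ha hc hac
    refine ⟨hxU, ?_⟩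
    set x := a • u + c • w with hx
    have key : ∀ z ∈ U, (0:ℝ) ≤ ⟪Q z - y, z - x⟫ := by
      intro z hz
      have h1 := hLoD z hz u hu.1
      have h2 := hLoD z hz w hw.1
      rw [hu.2] at h1
      rw [hw.2] at h2
      have heq : ⟪Q z - y, z - x⟫ = a * ⟪Q z - y, z - u⟫ + c * ⟪Q z - y, z - w⟫ := by
        rw [← real_inner_smul_right, ← real_inner_smul_right, ← inner_add_right]
        congr 1
        rw [smul_sub, smul_sub, hx]
        match_scalars <;> ring_nf <;> nlinarith [hac]
      rw [heq]
      exact add_nonneg (mul_nonneg ha h1) (mul_nonneg hc h2)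
    have hdir : ∀ v : EuclideanSpace ℝ (Fin K), (0:ℝ) ≤ ⟪Q x - y, v⟫ := by
      intro v
      have hcont : ContinuousAt Q x := hQcont.continuousAt (hUopen.mem_nhds hxU)
      have hmap : Filter.Tendsto (fun ε : ℝ => x + ε • v) (nhds 0) (nhds x) := by
        have hc' : Continuous fun ε : ℝ => x + ε • v := by continuity
      -- tendsto of the whole expression
        have := hc'.tendsto 0
        simpa using this
      have htend : Filter.Tendsto (fun ε : ℝ => ⟪Q (x + ε • v) - y, v⟫)
          (nhdsWithin 0 (Set.Ioi 0)) (nhds ⟪Q x - y, v⟫) := by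
        have hQt : Filter.Tendsto (fun ε : ℝ => Q (x + ε • v)) (nhds 0) (nhds (Q x)) := by
          have : Q x = Q (x + (0:ℝ) • v) := by simp
          exact hcont.tendsto.comp hmap
        have : Filter.Tendsto (fun ε : ℝ => ⟪Q (x + ε • v) - y, v⟫) (nhds 0)
            (nhds ⟪Q x - y, v⟫) :=
          ((hQt.sub_const y).inner tendsto_const_nhds)
        exact this.mono_left nhdsWithin_le_nhds
      have hev : ∀ᶠ ε : ℝ in nhdsWithin 0 (Set.Ioi 0),
          (0:ℝ) ≤ ⟪Q (x + ε • v) - y, v⟫ := by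
        have hUnhd : ∀ᶠ ε : ℝ in nhds 0, x + ε • v ∈ U := hmap.eventually (hUopen.eventually_mem hxU)
        filter_upwards [eventually_nhdsWithin_of_eventually_nhds hUnhd,
          self_mem_nhdsWithin] with ε hεU (hεpos : ε ∈ Set.Ioi 0)
        have := key _ hεU
        have hzx : (x + ε • v) - x = ε • v := by abel
        rw [hzx, real_inner_smul_right] at this
        exact by nlinarith [this, Set.mem_Ioi.mp hεpos]
      exact ge_of_tendsto htend hev
    have h0 := hdir (y - Q x)
    have : ‖Q x - y‖ ^ 2 ≤ 0 := by
      have : ⟪Q x - y, y - Q x⟫ = -‖Q x - y‖ ^ 2 := by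
        rw [show y - Q x = -(Q x - y) by abel, inner_neg_right, real_inner_self_eq_norm_sq]
      nlinarith [h0, this]
    have : Q x - y = 0 := by
      have := sq_nonneg ‖Q x - y‖
      have hn : ‖Q x - y‖ = 0 := by nlinarith
      exact norm_eq_zero.mp hn
    exact sub_eq_zero.mp this
  -- fibers of Q ∘ f are convex
  have hfib2 : ∀ y, Convex ℝ {u ∈ T | Q (f u) = y} := by
    intro y u hu w hw a c ha hc hac
    have hxT : a • u + c • w ∈ T := hTconv hu.1 hw.1 ha hc hac
    refine ⟨hxT, ?_⟩
    have hfx : f (a • u + c • w) = a • f u + c • f w := by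
      simp only [hf, map_add, map_smul]
      match_scalars <;> ring_nf <;> nlinarith [hac]
    rw [hfx]
    exact (hfib y ⟨hfT hu.1, hu.2⟩ ⟨hfT hw.1, hw.2⟩ ha hc hac).2
  refine ⟨hfib2, ?_⟩
  constructor
  · intro hinj u hu w hw hconst
    exact hinj hu hw (hconst w (right_mem_segment ℝ u w)).symm
  · intro h u hu w hw heq
    refine h u hu w hw ?_
    intro x hx
    have hseg : segment ℝ u w ⊆ {z ∈ T | Q (f z) = Q (f u)} :=
      (hfib2 (Q (f u))).segment_subset ⟨hu, rfl⟩ ⟨hw, heq.symm⟩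
    exact (hseg hx).2
end

section
/- Let Q : T → ℝ^K. If Q is continuous on an open convex U ⊆ T, satisfies the law of demand, and at a point u ∈ U there exists a neighborhood on which Q is injective, then the fiber Q⁻¹(Q(u)) ∩ U equals {u}. -/
open scoped RealInnerProductSpace

open Filter Topology

private lemma minty_lemma {K : ℕ} {U : Set (EuclideanSpace ℝ (Fin K))}
    (hUopen : IsOpen U)
    {Q : EuclideanSpace ℝ (Fin K) → EuclideanSpace ℝ (Fin K)}
    (hQcont : ContinuousOn Q U)
    {p v : EuclideanSpace ℝ (Fin K)} (hv : v ∈ U)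
    (h : ∀ z ∈ U, (0:ℝ) ≤ ⟪Q z - p, z - v⟫) : Q v = p := by
  have key : ∀ d : EuclideanSpace ℝ (Fin K), (0:ℝ) ≤ ⟪Q v - p, d⟫ := by
    intro d
    have hcQ : ContinuousAt Q v := hQcont.continuousAt (hUopen.mem_nhds hv)
    have hline : Tendsto (fun ε : ℝ => v + ε • d) (𝓝[>] (0:ℝ)) (𝓝 v) := by
      have hc : Continuous fun ε : ℝ => v + ε • d := by continuity
      have := hc.tendsto 0
      simp only [zero_smul, add_zero] at this
      exact this.mono_left nhdsWithin_le_nhds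
    have hmem : ∀ᶠ ε in 𝓝[>] (0:ℝ), v + ε • d ∈ U :=
      hline.eventually_mem (hUopen.mem_nhds hv)
    have hev : ∀ᶠ ε in 𝓝[>] (0:ℝ), (0:ℝ) ≤ ⟪Q (v + ε • d) - p, d⟫ := by
      filter_upwards [hmem, self_mem_nhdsWithin] with ε hεU hεpos
      have h0 := h _ hεU
      have heq : (v + ε • d) - v = ε • d := by abel
      rw [heq, real_inner_smul_right] at h0
      exact nonneg_of_mul_nonneg_right h0 hεpos
    have hten : Tendsto (fun ε : ℝ => ⟪Q (v + ε • d) - p, d⟫) (𝓝[>] (0:ℝ))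
        (𝓝 ⟪Q v - p, d⟫) := by
      have hci : ContinuousAt (fun x => ⟪Q x - p, d⟫) v :=
        (hcQ.sub continuousAt_const).inner continuousAt_const
      exact hci.tendsto.comp hline
    exact ge_of_tendsto hten hev
  have h1 := key (-(Q v - p))
  rw [inner_neg_right] at h1
  have h2 : ⟪Q v - p, Q v - p⟫ ≤ 0 := by linarith
  have h3 : Q v - p = 0 := by
    have := real_inner_self_nonneg (x := Q v - p)
    exact inner_self_eq_zero.mp (le_antisymm h2 this)
  exact sub_eq_zero.mp h3

theorem stmt_18 {K : ℕ} (U : Set (EuclideanSpace ℝ (Fin K)))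
    (hUopen : IsOpen U) (hUconv : Convex ℝ U)
    (Q : EuclideanSpace ℝ (Fin K) → EuclideanSpace ℝ (Fin K))
    (hQcont : ContinuousOn Q U)
    (hLoD : ∀ u ∈ U, ∀ w ∈ U, (0:ℝ) ≤ ⟪Q u - Q w, u - w⟫)
    (u : EuclideanSpace ℝ (Fin K)) (hu : u ∈ U)
    (hloc : ∃ N ∈ nhds u, Set.InjOn Q N) :
    {w ∈ U | Q w = Q u} = {u} := by
  obtain ⟨N, hN, hinj⟩ := hloc
  ext w
  simp only [Set.mem_setOf_eq, Set.mem_singleton_iff]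
  constructor
  · rintro ⟨hwU, hQw⟩
    by_contra hne
    -- for every t ∈ [0,1], the point u + t•(w-u) has Q-value Q u
    have hseg : ∀ t : ℝ, 0 ≤ t → t ≤ 1 → Q (u + t • (w - u)) = Q u := by
      intro t ht0 ht1
      have hvU : u + t • (w - u) ∈ U := by
        have := hUconv hu hwU (by linarith : (0:ℝ) ≤ 1 - t) ht0 (by ring)
        convert this using 1
        simp [smul_sub, sub_smul]
        abel
      refine minty_lemma hUopen hQcont hvU ?_
      intro z hz
      have h1 := hLoD z hz u hu
      have h2 := hLoD z hz w hwU
      rw [hQw] at h2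
      have heq : z - (u + t • (w - u)) = (1 - t) • (z - u) + t • (z - w) := by
        simp [smul_sub, sub_smul]
        abel
      rw [heq, inner_add_right, real_inner_smul_right, real_inner_smul_right]
      have := mul_nonneg (by linarith : (0:ℝ) ≤ 1 - t) h1
      have := mul_nonneg ht0 h2
      linarith
    -- choose small t with u + t•(w-u) ∈ N
    have hline : Tendsto (fun t : ℝ => u + t • (w - u)) (𝓝[>] (0:ℝ)) (𝓝 u) := by
      have hc : Continuous fun t : ℝ => u + t • (w - u) := by continuity
      have := hc.tendsto 0
      simp only [zero_smul, add_zero] at this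
      exact this.mono_left nhdsWithin_le_nhds
    have hmemN : ∀ᶠ t in 𝓝[>] (0:ℝ), u + t • (w - u) ∈ N := hline.eventually_mem hN
    have hlt1 : ∀ᶠ t in 𝓝[>] (0:ℝ), t < 1 := by
      have : ∀ᶠ t in 𝓝 (0:ℝ), t < 1 := Filter.Tendsto.eventually_lt_const (by norm_num) tendsto_id
      exact this.filter_mono nhdsWithin_le_nhds
    obtain ⟨t, htN, ht1, ht0⟩ := (hmemN.and (hlt1.and self_mem_nhdsWithin)).exists
    have hv := hseg t (le_of_lt ht0) (le_of_lt ht1)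
    have hvne : u + t • (w - u) ≠ u := by
      intro h
      apply hne
      have h1 : t • (w - u) = 0 := by
        have := congrArg (fun x => x - u) h
        simpa using this
      have h2 : w - u = 0 := by
        rcases smul_eq_zero.mp h1 with h | h
        · exact absurd h (ne_of_gt ht0)
        · exact h
      have := sub_eq_zero.mp h2
      exact this
    exact hvne (hinj htN (mem_of_mem_nhds hN) hv)
  · rintro rfl
    exact ⟨hu, rfl⟩
end

section
/- Suppose Q : U → ℝ^K satisfies strict own-good monotonicity and weak substitutability on a Cartesian-product domain U = ∏ₖ Uₖ ⊆ ℝ^K, and additionally: for all u ≠ ũ in U with the set I = {k : uₖ > ũₖ} nonempty, ∑_{k ∈ I} Qₖ(u) > ∑_{k ∈ I} Qₖ(ũ). Then Q is a P-function: for all u ≠ ũ in U there exists k with (Qₖ(u) - Qₖ(ũ))(uₖ - ũₖ) > 0. -/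
theorem stmt_19 {K : ℕ} (Uk : Fin K → Set ℝ)
    (U : Set (Fin K → ℝ)) (hU : U = Set.univ.pi Uk)
    (Q : (Fin K → ℝ) → (Fin K → ℝ))
    (hmono : ∀ k, ∀ u ∈ U, ∀ w ∈ U,
      (w k < u k ∧ ∀ j ≠ k, u j = w j) → Q w k < Q u k)
    (hsub : ∀ k, ∀ u ∈ U, ∀ w ∈ U,
      (w k < u k ∧ ∀ j ≠ k, u j = w j) → ∀ l ≠ k, Q u l ≤ Q w l)
    (hagg : ∀ u ∈ U, ∀ w ∈ U, u ≠ w → {k | w k < u k}.Nonempty →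
      ∑ k ∈ Finset.univ.filter (fun k => w k < u k), Q w k <
        ∑ k ∈ Finset.univ.filter (fun k => w k < u k), Q u k) :
    ∀ u ∈ U, ∀ w ∈ U, u ≠ w → ∃ k, 0 < (Q u k - Q w k) * (u k - w k) := by
  intro u hu w hw hne
  by_cases h : {k | w k < u k}.Nonempty
  · obtain ⟨k, hk, hlt⟩ := Finset.exists_lt_of_sum_lt (hagg u hu w hw hne h)
    simp only [Finset.mem_filter] at hk
    exact ⟨k, mul_pos (by linarith) (by linarith [hk.2])⟩
  · have h' : {k | u k < w k}.Nonempty := by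
      by_contra h''
      apply hne
      funext k
      have h1 : ¬ w k < u k := fun hc => h ⟨k, hc⟩
      have h2 : ¬ u k < w k := fun hc => h'' ⟨k, hc⟩
      linarith [not_lt.mp h1, not_lt.mp h2]
    obtain ⟨k, hk, hlt⟩ := Finset.exists_lt_of_sum_lt (hagg w hw u hu hne.symm h')
    simp only [Finset.mem_filter] at hk
    exact ⟨k, mul_pos_of_neg_of_neg (by linarith) (by linarith [hk.2])⟩
end
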